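/- Let v, w ∈ ℝ^d lie in the same chamber of constancy, i.e. ⌈n_i(v)⌉ = ⌈n_i(w)⌉ for all i = 1,…,t. Then {m ∈ ℤ^d : n_i(m − v) > 0 for all i} ⊆ {m ∈ ℤ^d : n_i(m − w) > 0 for all i} if and only if {i : n_i(w) ∈ ℤ} ⊆ {i : n_i(v) ∈ ℤ}; equivalently, the open conic module of v is contained in the open conic module of w exactly when the open cell containing v lies in the boundary (closure) of the open cell containing w. -/

import Mathlib

open Set

set_option synthInstance.maxHeartbeats 400000
set_option maxHeartbeats 1000000

noncomputable section

/-- The embedding of the lattice `ℤ^d` into `ℝ^d`. -/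
def ιZ (d : ℕ) (m : Fin d → ℤ) : Fin d → ℝ := fun j => (m j : ℝ)

/-- The lattice points of the translated cone `C + v`, where
`C = {x | ∀ i, 0 ≤ n i x}`. -/
def latticePts {d t : ℕ} (n : Fin t → ((Fin d → ℝ) →ₗ[ℝ] ℝ)) (v : Fin d → ℝ) :
    Set (Fin d → ℤ) :=
  {m | ∀ i, 0 ≤ n i (ιZ d m - v)}

/-- The lattice points of the interior of the translated cone `C + v`
(the "open conic" lattice set). -/
def openLatticePts {d t : ℕ} (n : Fin t → ((Fin d → ℝ) →ₗ[ℝ] ℝ)) (v : Fin d → ℝ) :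
    Set (Fin d → ℤ) :=
  {m | ∀ i, 0 < n i (ιZ d m - v)}

/-! If `n i w ∈ ℤ` forces `n i v ∈ ℤ`, then equal ceilings give, for every integer `z`,
`n i v < z → n i w < z`, which is the inclusion. Conversely, if `n i₀ w ∈ ℤ` but `n i₀ v ∉ ℤ`,
irredundancy and full-dimensionality produce a lattice vector `u` in the relative interior of the
`i₀`-th facet; adding a large multiple of `u` to a lattice point on the hyperplane
`n i₀ = ⌈n i₀ v⌉` (primitivity) gives a point of the open module of `v` lying on the boundary
hyperplane `n i₀ = n i₀ w` of that of `w`. -/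

open Filter

lemma ιZ_add {d : ℕ} (a b : Fin d → ℤ) : ιZ d (a + b) = ιZ d a + ιZ d b := by
  funext j; simp [ιZ]

lemma ιZ_sub {d : ℕ} (a b : Fin d → ℤ) : ιZ d (a - b) = ιZ d a - ιZ d b := by
  funext j; simp [ιZ]

lemma ιZ_zsmul {d : ℕ} (k : ℤ) (a : Fin d → ℤ) : ιZ d (k • a) = (k : ℝ) • ιZ d a := by
  funext j; simp [ιZ]

lemma lt_of_ceil_eq_of_lt {α : Type*} [Field α] [LinearOrder α] [IsStrictOrderedRing α]
    [FloorRing α] {a b : α} (hab : ⌈a⌉ = ⌈b⌉) (hint : (∃ z : ℤ, b = z) → ∃ z : ℤ, a = z)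
    {z : ℤ} (hz : a < z) : b < z := by
  by_cases hb : ∃ k : ℤ, b = k
  · obtain ⟨k, rfl⟩ := hb
    obtain ⟨l, rfl⟩ := hint ⟨k, rfl⟩
    rw [Int.ceil_intCast, Int.ceil_intCast] at hab
    rwa [← hab]
  · calc b < ⌈b⌉ := (Int.le_ceil b).lt_of_ne fun h => hb ⟨_, h⟩
      _ = ⌈a⌉ := by rw [hab]
      _ ≤ z := by exact_mod_cast Int.ceil_le.2 hz.le

lemma pos_of_mem_interior_setOf_nonneg {E : Type*} [NormedAddCommGroup E] [NormedSpace ℝ E]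
    [FiniteDimensional ℝ E] {f : E →ₗ[ℝ] ℝ} (hf : f ≠ 0) {x : E}
    (hx : x ∈ interior {y | 0 ≤ f y}) : 0 < f x := by
  rwa [show {y | 0 ≤ f y} = f ⁻¹' Ici 0 from rfl,
    ← (f.isOpenMap_of_finiteDimensional (LinearMap.surjective_of_ne_zero hf)
      ).preimage_interior_eq_interior_preimage f.continuous_of_finiteDimensional,
    interior_Ici] at hx

lemma exists_lattice_forall_pos {d : ℕ} {ι : Type*} [Finite ι] (f : ι → (Fin d → ℝ) →ₗ[ℝ] ℝ)
    (h : ∃ x, ∀ i, 0 < f i x) : ∃ m : Fin d → ℤ, ∀ i, 0 < f i (ιZ d m) := by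
  obtain ⟨x, hx⟩ := h
  have hU : IsOpen {y | ∀ i, 0 < f i y} := by
    simp only [ofPred_forall]
    exact isOpen_iInter_of_finite fun i => isOpen_lt continuous_const
      (f i).continuous_of_finiteDimensional
  obtain ⟨ε, hε, hball⟩ := Metric.isOpen_iff.1 hU x hx
  -- Rounding `ε⁻¹ • x` to the lattice moves it by at most `1/2` in each coordinate.
  refine ⟨fun j => round (ε⁻¹ * x j), fun i => ?_⟩
  have hmem : ε • ιZ d (fun j => round (ε⁻¹ * x j)) ∈ Metric.ball x ε := by
    rw [Metric.mem_ball, dist_pi_lt_iff hε]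
    intro j
    have hxj : x j = ε * (ε⁻¹ * x j) := by field_simp
    rw [Pi.smul_apply, smul_eq_mul, Real.dist_eq, hxj, ← mul_sub, abs_mul, abs_of_pos hε,
      ιZ, abs_sub_comm]
    nlinarith [abs_sub_round (ε⁻¹ * x j)]
  have := hball hmem i
  rw [map_smul, smul_eq_mul] at this
  exact pos_of_mul_pos_right this hε.le

lemma one_le_of_pos_of_intValued {d : ℕ} {f : (Fin d → ℝ) →ₗ[ℝ] ℝ}
    (hf : ∀ m, ∃ z : ℤ, f (ιZ d m) = z) {m : Fin d → ℤ} (hm : 0 < f (ιZ d m)) :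
    1 ≤ f (ιZ d m) := by
  obtain ⟨z, hz⟩ := hf m
  rw [hz] at hm ⊢
  exact_mod_cast Int.cast_pos.1 hm

lemma exists_forall_pos_of_interior_nonempty {E ι : Type*} [NormedAddCommGroup E]
    [NormedSpace ℝ E] [FiniteDimensional ℝ E] {n : ι → E →ₗ[ℝ] ℝ} (hne : ∀ i, n i ≠ 0)
    (hfull : (interior {x | ∀ i, 0 ≤ n i x}).Nonempty) : ∃ y, ∀ i, 0 < n i y := by
  obtain ⟨y, hy⟩ := hfull
  exact ⟨y, fun i => pos_of_mem_interior_setOf_nonneg (hne i)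
    (interior_mono (fun _ hx => hx i : {x | ∀ i, 0 ≤ n i x} ⊆ {y | 0 ≤ n i y}) hy)⟩

lemma exists_neg_of_ssubset_setOf_forall_ne {E ι : Type*} [AddCommGroup E] [Module ℝ E]
    {n : ι → E →ₗ[ℝ] ℝ} {i₀ : ι}
    (hirr : {x | ∀ i, 0 ≤ n i x} ⊂ {x | ∀ j, j ≠ i₀ → 0 ≤ n j x}) :
    ∃ x, (∀ j, j ≠ i₀ → 0 ≤ n j x) ∧ n i₀ x < 0 := by
  obtain ⟨x, hx, hxC⟩ := Set.exists_of_ssubset hirr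
  refine ⟨x, hx, not_le.1 fun h => hxC fun j => ?_⟩
  rcases eq_or_ne j i₀ with rfl | hj
  exacts [h, hx j hj]

lemma exists_lattice_relint_facet {d : ℕ} {ι : Type*} [Finite ι] [DecidableEq ι]
    {n : ι → (Fin d → ℝ) →ₗ[ℝ] ℝ} (hint : ∀ i (m : Fin d → ℤ), ∃ z : ℤ, n i (ιZ d m) = z)
    {i₀ : ι} (hy : ∃ y, ∀ i, 0 < n i y) (hx : ∃ x, (∀ j, j ≠ i₀ → 0 ≤ n j x) ∧ n i₀ x < 0) :
    ∃ u, n i₀ (ιZ d u) = 0 ∧ ∀ j, j ≠ i₀ → 0 < n j (ιZ d u) := by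
  obtain ⟨a, ha⟩ := exists_lattice_forall_pos n hy
  obtain ⟨y, hy⟩ := hy
  obtain ⟨x, hxj, hxi₀⟩ := hx
  -- With `c = 2 * n i₀ y / -n i₀ x ≥ 0`, `n i₀ (c • x + y) = -n i₀ y < 0` and each other `n j` is
  -- positive.
  obtain ⟨b, hb⟩ := exists_lattice_forall_pos (Function.update n i₀ (-n i₀)) <| by
    refine ⟨(2 * n i₀ y / -n i₀ x) • x + y, fun j => ?_⟩
    have hc : 0 ≤ 2 * n i₀ y / -n i₀ x := div_nonneg (by linarith [hy i₀]) (by linarith)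
    rcases eq_or_ne j i₀ with rfl | hj
    · simp only [Function.update_self, LinearMap.neg_apply, map_add, map_smul, smul_eq_mul]
      have hcx : 2 * n j y / -n j x * n j x = -(2 * n j y) := by
        field_simp [hxi₀.ne]
      linarith [hy j]
    · simp only [Function.update_of_ne hj, map_add, map_smul, smul_eq_mul]
      nlinarith [hy j, hxj j hj]
  obtain ⟨p, hp⟩ := hint i₀ a
  obtain ⟨q, hq⟩ := hint i₀ b
  have hp0 : (0 : ℝ) < p := hp ▸ ha i₀
  have hq0 : (q : ℝ) < 0 := by simpa [hq] using hb i₀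
  -- `p • b - q • a` kills `n i₀`, and is positive on the other facets since `p > 0 > q`.
  refine ⟨p • b - q • a, ?_, fun j hj => ?_⟩
  · simp only [ιZ_sub, ιZ_zsmul, map_sub, map_smul, smul_eq_mul, hp, hq]
    ring
  · have hbj : 0 < n j (ιZ d b) := by simpa [Function.update_of_ne hj] using hb j
    simp only [ιZ_sub, ιZ_zsmul, map_sub, map_smul, smul_eq_mul]
    nlinarith [ha j]

lemma exists_mem_openLatticePts_apply_eq_ceil {d t : ℕ} {n : Fin t → (Fin d → ℝ) →ₗ[ℝ] ℝ}
    (hint : ∀ i (m : Fin d → ℤ), ∃ z : ℤ, n i (ιZ d m) = z)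
    (hprim : ∀ i (z : ℤ), ∃ m : Fin d → ℤ, n i (ιZ d m) = z) {i₀ : Fin t} {u : Fin d → ℤ}
    (hu₀ : n i₀ (ιZ d u) = 0) (hu : ∀ j, j ≠ i₀ → 0 < n j (ιZ d u)) {v : Fin d → ℝ}
    (hv : ¬∃ z : ℤ, n i₀ v = z) :
    ∃ m ∈ openLatticePts n v, n i₀ (ιZ d m) = ⌈n i₀ v⌉ := by
  obtain ⟨m₀, hm₀⟩ := hprim i₀ ⌈n i₀ v⌉
  obtain ⟨K, hK⟩ : ∃ K : ℕ, ∀ j, n j (v - ιZ d m₀) < K :=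
    (eventually_all.2 fun j => tendsto_natCast_atTop_atTop.eventually_gt_atTop _).exists
  have hval : ∀ j, n j (ιZ d (m₀ + (K : ℤ) • u)) = n j (ιZ d m₀) + K * n j (ιZ d u) := by
    simp only [ιZ_add, ιZ_zsmul, map_add, map_smul, smul_eq_mul, Int.cast_natCast, implies_true]
  refine ⟨m₀ + (K : ℤ) • u, fun j => ?_, by rw [hval, hu₀, mul_zero, add_zero, hm₀]⟩
  rw [map_sub, hval]
  rcases eq_or_ne j i₀ with rfl | hj
  · rw [hu₀, mul_zero, add_zero, hm₀, sub_pos]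
    exact (Int.le_ceil _).lt_of_ne fun h => hv ⟨_, h⟩
  · have h1 := one_le_of_pos_of_intValued (hint j) (hu j hj)
    have h2 := hK j
    rw [map_sub] at h2
    nlinarith

lemma openLatticePts_subset_of_intValued_subset {d t : ℕ} {n : Fin t → (Fin d → ℝ) →ₗ[ℝ] ℝ}
    (hint : ∀ i (m : Fin d → ℤ), ∃ z : ℤ, n i (ιZ d m) = z) {v w : Fin d → ℝ}
    (hsame : ∀ i, ⌈n i v⌉ = ⌈n i w⌉)
    (h : {i | ∃ z : ℤ, n i w = z} ⊆ {i | ∃ z : ℤ, n i v = z}) :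
    openLatticePts n v ⊆ openLatticePts n w := by
  intro m hm i
  obtain ⟨z, hz⟩ := hint i m
  have hmi := hm i
  rw [map_sub, hz, sub_pos] at hmi
  change 0 < n i (ιZ d m - w)
  rw [map_sub, hz, sub_pos]
  exact lt_of_ceil_eq_of_lt (hsame i) (fun hw => h hw) hmi

theorem stmt_6_general
    (d t : ℕ)
    (n : Fin t → ((Fin d → ℝ) →ₗ[ℝ] ℝ))
    (hne : ∀ i, n i ≠ 0)
    (hint : ∀ i (m : Fin d → ℤ), ∃ z : ℤ, n i (ιZ d m) = z)
    (hprim : ∀ i (z : ℤ), ∃ m : Fin d → ℤ, n i (ιZ d m) = z)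
    (C : Set (Fin d → ℝ)) (hC : C = {x | ∀ i, 0 ≤ n i x})
    (hfull : (interior C).Nonempty)
    (hirr : ∀ i, C ⊂ {x | ∀ j, j ≠ i → 0 ≤ n j x})
    (v w : Fin d → ℝ) (hsame : ∀ i, ⌈n i v⌉ = ⌈n i w⌉) :
    openLatticePts n v ⊆ openLatticePts n w ↔
      {i | ∃ z : ℤ, n i w = z} ⊆ {i | ∃ z : ℤ, n i v = z} := by
  subst hC
  refine ⟨fun hsub i₀ ⟨z, hz⟩ => ?_, openLatticePts_subset_of_intValued_subset hint hsame⟩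
  by_contra hv
  obtain ⟨u, hu₀, hu⟩ := exists_lattice_relint_facet hint
    (exists_forall_pos_of_interior_nonempty hne hfull)
    (exists_neg_of_ssubset_setOf_forall_ne (hirr i₀))
  obtain ⟨m, hm, hmi₀⟩ := exists_mem_openLatticePts_apply_eq_ceil hint hprim hu₀ hu hv
  have := hsub hm i₀
  rw [map_sub, hmi₀, hsame, hz, Int.ceil_intCast, sub_self] at this
  exact lt_irrefl 0 this

/-- for `v, w` in the same chamber of constancy, the open conic lattice
set of `v` is contained in that of `w` iff every index where `n i w` is an integer is
also an index where `n i v` is an integer (i.e. the open cell of `v` lies in the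
closure of the open cell of `w`). -/
theorem stmt_6
    (d t : ℕ) (hd : 1 ≤ d)
    (n : Fin t → ((Fin d → ℝ) →ₗ[ℝ] ℝ))
    (hne : ∀ i, n i ≠ 0)
    (hint : ∀ i (m : Fin d → ℤ), ∃ z : ℤ, n i (ιZ d m) = z)
    (hprim : ∀ i (z : ℤ), ∃ m : Fin d → ℤ, n i (ιZ d m) = z)
    (C : Set (Fin d → ℝ)) (hC : C = {x | ∀ i, 0 ≤ n i x})
    (hfull : (interior C).Nonempty)
    (hpointed : Submodule.span ℝ (Set.range n) = ⊤)
    (hirr : ∀ i, C ⊂ {x | ∀ j, j ≠ i → 0 ≤ n j x})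
    (v w : Fin d → ℝ) (hsame : ∀ i, ⌈n i v⌉ = ⌈n i w⌉) :
    openLatticePts n v ⊆ openLatticePts n w ↔
      {i | ∃ z : ℤ, n i w = z} ⊆ {i | ∃ z : ℤ, n i v = z} :=
  stmt_6_general d t n hne hint hprim C hC hfull hirr v w hsame
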